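/- For every integer n ≥ 1, the graph Bₙ satisfies E(Bₙ) < 2χ(Bₙ) = 2n (for n ≥ 3; in general E(Bₙ) < 2χ(Bₙ)), and all eigenvalues of Bₙ are strictly greater than −2. -/

import Mathlib

set_option linter.unusedSectionVars false

open Finset SimpleGraph

namespace GraphEnergy

variable {V : Type*} [Fintype V] [DecidableEq V]

/-- The real adjacency matrix of a simple graph. -/
noncomputable def adjMat (G : SimpleGraph V) : Matrix V V ℝ :=
  letI := Classical.decRel G.Adj
  G.adjMatrix ℝ

theorem adjMat_isHermitian (G : SimpleGraph V) : (adjMat G).IsHermitian := by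
  letI := Classical.decRel G.Adj
  ext i j
  simp [adjMat, Matrix.conjTranspose_apply, SimpleGraph.adjMatrix_apply, SimpleGraph.adj_comm]

/-- The eigenvalues (with multiplicity) of the real adjacency matrix of `G`, indexed by `V`. -/
noncomputable def eig (G : SimpleGraph V) : V → ℝ :=
  (adjMat_isHermitian G).eigenvalues

/-- The energy of a graph: the sum of the absolute values of its adjacency eigenvalues. -/
noncomputable def energy (G : SimpleGraph V) : ℝ :=
  ∑ i, |eig G i|

/-- The rank of the adjacency matrix of `G` over `ℝ`. -/
noncomputable def grank (G : SimpleGraph V) : ℕ :=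
  (adjMat G).rank

/-- The disjoint union of two simple graphs. -/
def disjUnion {α β : Type*} (G : SimpleGraph α) (H : SimpleGraph β) : SimpleGraph (α ⊕ β) :=
  SimpleGraph.fromRel (Sum.LiftRel G.Adj H.Adj)

/-- `A n t`: the graph obtained from the complete graph `Kₙ` (on the `some` vertices) by adding
one new vertex (`none`) joined to exactly `t` vertices of `Kₙ`. -/
def A (n t : ℕ) : SimpleGraph (Option (Fin n)) :=
  SimpleGraph.fromRel (fun a b =>
    (a ≠ b ∧ a ≠ none ∧ b ≠ none) ∨ (∃ i : Fin n, a = some i ∧ b = none ∧ (i : ℕ) < t))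

/-- `B n`: the graph obtained from the complete graph `Kₙ` (on the `Sum.inl` vertices) by adding
two new pendant vertices (the `Sum.inr` vertices), each adjacent to the same vertex `0` of `Kₙ`. -/
def B (n : ℕ) : SimpleGraph (Fin n ⊕ Fin 2) :=
  SimpleGraph.fromRel (fun a b =>
    (∃ i j : Fin n, i ≠ j ∧ a = Sum.inl i ∧ b = Sum.inl j) ∨
    (∃ i : Fin n, ∃ p : Fin 2, (i : ℕ) = 0 ∧ a = Sum.inl i ∧ b = Sum.inr p))

/-- `H5`: a triangle `{0,1,2}` with two pendant vertices `3, 4` adjacent to the distinct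
vertices `0` and `1` respectively. -/
def H5 : SimpleGraph (Fin 5) :=
  SimpleGraph.fromRel (fun a b =>
    (a = 0 ∧ b = 1) ∨ (a = 1 ∧ b = 2) ∨ (a = 0 ∧ b = 2) ∨ (a = 0 ∧ b = 3) ∨ (a = 1 ∧ b = 4))

open Polynomial Matrix in
lemma det_smul_one_sub (G : SimpleGraph V) (x : ℝ) :
    (x • (1 : Matrix V V ℝ) - adjMat G).det = ∏ i, (x - eig G i) := by
  have hA := adjMat_isHermitian G
  set U : Matrix V V ℝ := (Matrix.IsHermitian.eigenvectorUnitary hA : Matrix V V ℝ) with hUdef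
  have hU1 : U * star U = 1 := (Matrix.mem_unitaryGroup_iff).mp (hA.eigenvectorUnitary).2
  have hst : adjMat G = U * Matrix.diagonal (eig G) * star U := by
    have h := hA.spectral_theorem
    simpa [eig, Function.comp] using h
  have key : x • (1 : Matrix V V ℝ) - adjMat G
      = U * (Matrix.diagonal (fun i => x - eig G i)) * star U := by
    rw [hst]
    have h1 : Matrix.diagonal (fun i => x - eig G i)
        = x • (1 : Matrix V V ℝ) - Matrix.diagonal (eig G) := by
      rw [Matrix.smul_one_eq_diagonal, Matrix.diagonal_sub]
    rw [h1, Matrix.mul_sub, Matrix.sub_mul, Matrix.mul_smul, Matrix.mul_one, Matrix.smul_mul, hU1]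
  rw [key, Matrix.det_mul, Matrix.det_mul]
  have h2 : U.det * (star U).det = 1 := by rw [← Matrix.det_mul, hU1, Matrix.det_one]
  rw [Matrix.det_diagonal, mul_right_comm, h2, one_mul]


set_option linter.unreachableTactic false in
set_option linter.unusedTactic false in
open Matrix in
set_option maxHeartbeats 1000000 in
lemma det_block (n : ℕ) [NeZero n] (x : ℝ) (hx : x ≠ 0) (hx1 : x + 1 ≠ 0) :
    (x • (1 : Matrix (Fin n ⊕ Fin 2) (Fin n ⊕ Fin 2) ℝ) -
      Matrix.fromBlocks (Matrix.of fun i j => if i = j then 0 else 1)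
        (Matrix.of fun i _ => if i = (0 : Fin n) then 1 else 0)
        (Matrix.of fun _ j => if j = (0 : Fin n) then 1 else 0) 0).det * (x + 1) =
    (x + 1) ^ (n - 1) * x *
      (x ^ 3 - ((n : ℝ) - 2) * x ^ 2 - ((n : ℝ) + 1) * x + (2 * (n : ℝ) - 4)) := by
  set w : Fin n → ℝ := fun i => if i = 0 then 1 else 0 with hw
  set s : ℝ := (x + 1)⁻¹ with hs
  set t : ℝ := 2 / x with ht
  -- step 1 : rewrite as a block matrix
  have h1 : (x • (1 : Matrix (Fin n ⊕ Fin 2) (Fin n ⊕ Fin 2) ℝ) -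
      Matrix.fromBlocks (Matrix.of fun i j => if i = j then 0 else 1)
        (Matrix.of fun i _ => if i = (0 : Fin n) then 1 else 0)
        (Matrix.of fun _ j => if j = (0 : Fin n) then 1 else 0) 0) =
      Matrix.fromBlocks
        (Matrix.of fun i j => x * (if i = j then 1 else 0) - (if i = j then 0 else 1))
        (Matrix.of fun i _ => -(w i)) (Matrix.of fun _ j => -(w j))
        (x • (1 : Matrix (Fin 2) (Fin 2) ℝ)) := by
    ext i j
    rcases i with i | i <;> rcases j with j | j <;>
      simp [Matrix.one_apply, Matrix.fromBlocks, hw] <;> aesop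
  rw [h1]
  letI : Invertible (x • (1 : Matrix (Fin 2) (Fin 2) ℝ)) :=
    ⟨x⁻¹ • 1, by simp [smul_smul, hx], by simp [smul_smul, hx]⟩
  rw [Matrix.det_fromBlocks₂₂]
  have hinv : ⅟(x • (1 : Matrix (Fin 2) (Fin 2) ℝ)) = x⁻¹ • 1 := rfl
  have hdet2 : (x • (1 : Matrix (Fin 2) (Fin 2) ℝ)).det = x ^ 2 := by
    simp [Matrix.det_smul]
  rw [hdet2, hinv]
  -- compute the Schur complement
  have h2 : ((Matrix.of fun i j => x * (if i = j then 1 else 0) - (if i = j then 0 else 1)) -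
      (Matrix.of fun i (_ : Fin 2) => -(w i)) * (x⁻¹ • (1 : Matrix (Fin 2) (Fin 2) ℝ)) *
        (Matrix.of fun (_ : Fin 2) j => -(w j))) =
      (x + 1) • ((1 : Matrix (Fin n) (Fin n) ℝ) +
        (Matrix.of fun i p => if p = (0 : Fin 2) then -s else -s * t * w i) *
        (Matrix.of fun (p : Fin 2) j => if p = (0 : Fin 2) then (1 : ℝ) else w j)) := by
    ext i j
    simp only [Matrix.sub_apply, Matrix.smul_apply, Matrix.add_apply, Matrix.mul_apply,
      Matrix.of_apply, Matrix.one_apply, Fin.sum_univ_two, smul_eq_mul, hw, hs, ht,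
      show ((1 : Fin 2) = (0 : Fin 2)) = False by simp,
      show ((0 : Fin 2) = (1 : Fin 2)) = False by simp,
      show ((0 : Fin 2) = (0 : Fin 2)) = True by simp,
      show ((1 : Fin 2) = (1 : Fin 2)) = True by simp, if_true, if_false]
    split_ifs <;> subst_vars <;> first
      | (field_simp; ring)
      | field_simp
      | simp_all
      | (exfalso; tauto)
  rw [h2, Matrix.det_smul, Matrix.det_one_add_mul_comm]
  have h3 : (Matrix.of fun (p : Fin 2) j => if p = (0 : Fin 2) then (1 : ℝ) else w j) *
      (Matrix.of fun i (p : Fin 2) => if p = (0 : Fin 2) then -s else -s * t * w i) =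
      Matrix.of ![![-(n : ℝ) * s, -(s * t)], ![-s, -(s * t)]] := by
    ext p q
    fin_cases p <;> fin_cases q <;>
      simp [Matrix.mul_apply, hw, mul_ite, ite_mul, Finset.sum_ite_eq',
        Finset.sum_const, Finset.card_univ, mul_comm, nsmul_eq_mul]
  rw [h3]
  have h4 : ((1 : Matrix (Fin 2) (Fin 2) ℝ) +
      Matrix.of ![![-(n : ℝ) * s, -(s * t)], ![-s, -(s * t)]]).det =
      (1 - (n : ℝ) * s) * (1 - s * t) - (s * t) * s := by
    simp [Matrix.det_fin_two, Matrix.one_apply]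
    ring
  rw [h4]
  obtain ⟨m, rfl⟩ : ∃ m, n = m + 1 := ⟨n - 1, (Nat.succ_pred_eq_of_pos (NeZero.pos n)).symm⟩
  simp only [Nat.add_sub_cancel, hs, ht]
  push_cast
  rw [Fintype.card_fin, pow_succ]
  field_simp
  ring


open Matrix in
lemma adjMat_apply_adj (G : SimpleGraph V) {i j : V} (h : G.Adj i j) :
    adjMat G i j = 1 := by
  unfold adjMat
  letI := Classical.decRel G.Adj
  simp [h]

lemma adjMat_apply_not_adj (G : SimpleGraph V) {i j : V} (h : ¬ G.Adj i j) :
    adjMat G i j = 0 := by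
  unfold adjMat
  letI := Classical.decRel G.Adj
  simp [h]

lemma adjMat_apply_ite (G : SimpleGraph V) (i j : V) [Decidable (G.Adj i j)] :
    adjMat G i j = if G.Adj i j then 1 else 0 := by
  by_cases h : G.Adj i j
  · rw [if_pos h, adjMat_apply_adj G h]
  · rw [if_neg h, adjMat_apply_not_adj G h]

lemma B_adj (n : ℕ) [NeZero n] : ∀ a b, (B n).Adj a b ↔
    (∃ i j : Fin n, i ≠ j ∧ a = Sum.inl i ∧ b = Sum.inl j) ∨
    (∃ i : Fin n, ∃ p : Fin 2, i = 0 ∧ ((a = Sum.inl i ∧ b = Sum.inr p) ∨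
      (b = Sum.inl i ∧ a = Sum.inr p))) := by
  intro a b
  constructor
  · rintro ⟨hne, h | h⟩
    · rcases h with h | h
      · exact Or.inl h
      · obtain ⟨i, p, hi, ha, hb⟩ := h
        exact Or.inr ⟨i, p, Fin.ext hi, Or.inl ⟨ha, hb⟩⟩
    · rcases h with h | h
      · obtain ⟨i, j, hij, hb, ha⟩ := h
        exact Or.inl ⟨j, i, hij.symm, ha, hb⟩
      · obtain ⟨i, p, hi, hb, ha⟩ := h
        exact Or.inr ⟨i, p, Fin.ext hi, Or.inr ⟨hb, ha⟩⟩
  · rintro (⟨i, j, hij, ha, hb⟩ | ⟨i, p, hi, ⟨ha, hb⟩ | ⟨hb, ha⟩⟩)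
    · subst ha; subst hb
      exact ⟨by simpa using hij, Or.inl (Or.inl ⟨i, j, hij, rfl, rfl⟩)⟩
    · subst ha; subst hb
      exact ⟨by simp, Or.inl (Or.inr ⟨i, p, by simp [hi], rfl, rfl⟩)⟩
    · subst ha; subst hb
      exact ⟨by simp, Or.inr (Or.inr ⟨i, p, by simp [hi], rfl, rfl⟩)⟩
  
lemma adjMat_B (n : ℕ) [NeZero n] :
    adjMat (B n) = Matrix.fromBlocks (Matrix.of fun i j => if i = j then 0 else 1)
        (Matrix.of fun i (_ : Fin 2) => if i = (0 : Fin n) then 1 else 0)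
        (Matrix.of fun (_ : Fin 2) j => if j = (0 : Fin n) then 1 else 0) 0 := by
  classical
  ext a b
  rw [adjMat_apply_ite]
  rcases a with i | p <;> rcases b with j | q
  · simp only [Matrix.fromBlocks_apply₁₁, Matrix.of_apply]
    by_cases hij : i = j
    · simp [hij, B_adj]
    · simp only [if_neg hij, B_adj n (Sum.inl i) (Sum.inl j)]
      rw [if_pos]
      exact Or.inl ⟨i, j, hij, rfl, rfl⟩
  · simp only [Matrix.fromBlocks_apply₁₂, Matrix.of_apply, B_adj n (Sum.inl i) (Sum.inr q)]
    by_cases hi : i = 0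
    · rw [if_pos hi, if_pos]
      exact Or.inr ⟨i, q, hi, Or.inl ⟨rfl, rfl⟩⟩
    · rw [if_neg hi, if_neg]
      rintro (⟨_, _, _, h, _⟩ | ⟨i', p', hi', ⟨h1, h2⟩ | ⟨h1, h2⟩⟩) <;> simp_all
  · simp only [Matrix.fromBlocks_apply₂₁, Matrix.of_apply, B_adj n (Sum.inr p) (Sum.inl j)]
    by_cases hj : j = 0
    · rw [if_pos hj, if_pos]
      exact Or.inr ⟨j, p, hj, Or.inr ⟨rfl, rfl⟩⟩
    · rw [if_neg hj, if_neg]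
      rintro (⟨_, _, _, h, _⟩ | ⟨i', p', hi', ⟨h1, h2⟩ | ⟨h1, h2⟩⟩) <;> simp_all
  · simp only [Matrix.fromBlocks_apply₂₂, Matrix.zero_apply, B_adj n (Sum.inr p) (Sum.inr q)]
    rw [if_neg]
    rintro (⟨_, _, _, h, _⟩ | ⟨i', p', hi', ⟨h1, h2⟩ | ⟨h1, h2⟩⟩) <;> simp_all


open Polynomial in
lemma poly_step (n : ℕ) {V : Type*} [Fintype V] [DecidableEq V] (f : V → ℝ)
    (hdet : ∀ x : ℝ, x ≠ 0 → x + 1 ≠ 0 → (∏ i, (x - f i)) * (x + 1) =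
      (x + 1) ^ (n - 1) * x *
        (x ^ 3 - ((n : ℝ) - 2) * x ^ 2 - ((n : ℝ) + 1) * x + (2 * (n : ℝ) - 4))) :
    ∃ r1 r2 r3 : ℝ,
      (Finset.univ.val.map f) + {-1} =
        Multiset.replicate (n - 1) (-1) + ({0} + {r1, r2, r3}) ∧
      (∀ v : ℝ, v ^ 3 - ((n : ℝ) - 2) * v ^ 2 - ((n : ℝ) + 1) * v + (2 * (n : ℝ) - 4) =
        (v - r1) * (v - r2) * (v - r3)) := by
  set P : ℝ[X] := ∏ i, (X - C (f i)) with hP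
  set Cc : ℝ[X] := X ^ 3 - C ((n : ℝ) - 2) * X ^ 2 - C ((n : ℝ) + 1) * X + C (2 * (n : ℝ) - 4)
    with hCc
  have hX1 : (X + 1 : ℝ[X]) = X - C (-1) := by simp
  have hCm : Cc.Monic := by unfold Cc; monicity!
  have hCdeg : Cc.natDegree = 3 := by unfold Cc; compute_degree!
  have hPm : P.Monic := monic_prod_of_monic _ _ (fun i _ => monic_X_sub_C _)
  have hpoly : P * (X + 1) = (X + 1) ^ (n - 1) * X * Cc := by
    apply Polynomial.eq_of_infinite_eval_eq
    have hsub : ({0, -1}ᶜ : Set ℝ) ⊆ {x | eval x (P * (X + 1)) =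
        eval x ((X + 1) ^ (n - 1) * X * Cc)} := by
      intro x hx
      simp only [Set.mem_compl_iff, Set.mem_insert_iff, Set.mem_singleton_iff, not_or] at hx
      obtain ⟨h0, h1⟩ := hx
      have h1' : x + 1 ≠ 0 := by intro h; exact h1 (by linarith)
      simp only [Set.mem_setOf_eq, eval_mul, eval_prod, eval_add, eval_sub, eval_pow,
        eval_X, eval_C, eval_one, hP, hCc]
      exact hdet x h0 h1'
    exact (Set.Infinite.mono hsub (((Set.finite_singleton (-1:ℝ)).insert 0).infinite_compl))
  have hCsplits : Cc.Splits := by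
    have hdvd : Cc ∣ P * (X + 1) := ⟨(X + 1) ^ (n - 1) * X, by rw [hpoly]; ring⟩
    have hsp : (P * (X + 1)).Splits := by
      apply Polynomial.Splits.mul
      · exact Splits.prod (fun i _ => Splits.X_sub_C _)
      · rw [hX1]; exact Splits.X_sub_C _
    have hne : P * (X + 1) ≠ 0 := (hPm.mul (by rw [hX1]; exact monic_X_sub_C _)).ne_zero
    exact Splits.of_dvd hsp hne hdvd
  have hCfact : Cc = (Cc.roots.map fun a => X - C a).prod :=
    hCsplits.eq_prod_roots_of_monic hCm
  have hCcard : Cc.roots.card = 3 := by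
    have h := congrArg Polynomial.natDegree hCfact
    rw [hCdeg, natDegree_multiset_prod_X_sub_C_eq_card] at h
    exact h.symm
  obtain ⟨r1, r2, r3, hR⟩ := Multiset.card_eq_three.mp hCcard
  refine ⟨r1, r2, r3, ?_, ?_⟩
  · -- roots of both sides of hpoly
    have hPne : P ≠ 0 := hPm.ne_zero
    have hX1ne : (X + 1 : ℝ[X]) ≠ 0 := by rw [hX1]; exact X_sub_C_ne_zero _
    have hXne : (X : ℝ[X]) ≠ 0 := X_ne_zero
    have hCne : Cc ≠ 0 := hCm.ne_zero
    have hL : (P * (X + 1)).roots = P.roots + {-1} := by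
      rw [roots_mul (mul_ne_zero hPne hX1ne), hX1, roots_X_sub_C]
    have hRt : ((X + 1) ^ (n - 1) * X * Cc).roots =
        Multiset.replicate (n - 1) (-1) + ({0} + Cc.roots) := by
      rw [roots_mul (mul_ne_zero (mul_ne_zero (pow_ne_zero _ hX1ne) hXne) hCne),
        roots_mul (mul_ne_zero (pow_ne_zero _ hX1ne) hXne), roots_pow, hX1, roots_X_sub_C,
        roots_X, Multiset.nsmul_singleton, add_assoc]
    have hProots : P.roots = Finset.univ.val.map f := by
      have : P = ((Finset.univ.val.map f).map fun a => X - C a).prod := by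
        rw [hP, Finset.prod_eq_multiset_prod, Multiset.map_map]
        rfl
      rw [this, roots_multiset_prod_X_sub_C]
    rw [← hProots, ← hL, hpoly, hRt, hR]
  · intro v
    have h := congrArg (eval v) hCfact
    rw [hR] at h
    have h2 := h
    simp only [hCc, Multiset.insert_eq_cons, Multiset.map_cons, Multiset.prod_cons, Multiset.map_singleton,
      Multiset.prod_singleton, eval_mul, eval_add, eval_sub, eval_pow, eval_X, eval_C] at h2
    exact h2.trans (by ring)


lemma root_gt_neg_two (N r : ℝ) (hN : 1 ≤ N)
    (h : r ^ 3 - (N - 2) * r ^ 2 - (N + 1) * r + (2 * N - 4) = 0) : -2 < r := by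
  by_contra hc
  push_neg at hc
  have ht : 0 ≤ -(r + 2) := by linarith
  nlinarith [mul_nonneg ht ht, mul_nonneg (mul_nonneg ht ht) ht,
    mul_nonneg (by linarith : (0:ℝ) ≤ N - 1) ht,
    mul_nonneg (mul_nonneg (by linarith : (0:ℝ) ≤ N - 1) ht) ht]

lemma sum_abs_bound_ge_two (N r1 r2 r3 : ℝ) (hN : 2 ≤ N)
    (h1 : -2 < r1) (h2 : -2 < r2) (h3 : -2 < r3)
    (hs : r1 + r2 + r3 = N - 2) (hp : r1 * r2 * r3 = 4 - 2 * N) :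
    |r1| + |r2| + |r3| < N + 2 := by
  rcases le_or_gt 0 r1 with c1 | c1 <;> rcases le_or_gt 0 r2 with c2 | c2 <;>
    rcases le_or_gt 0 r3 with c3 | c3
  · rw [abs_of_nonneg c1, abs_of_nonneg c2, abs_of_nonneg c3]; linarith
  · rw [abs_of_nonneg c1, abs_of_nonneg c2, abs_of_neg c3]; linarith
  · rw [abs_of_nonneg c1, abs_of_neg c2, abs_of_nonneg c3]; linarith
  · rw [abs_of_nonneg c1, abs_of_neg c2, abs_of_neg c3]
    nlinarith [mul_pos_of_neg_of_neg c2 c3, c1, hp, hs, hN]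
  · rw [abs_of_neg c1, abs_of_nonneg c2, abs_of_nonneg c3]; linarith
  · rw [abs_of_neg c1, abs_of_nonneg c2, abs_of_neg c3]
    nlinarith [mul_pos_of_neg_of_neg c1 c3, c2, hp, hs, hN]
  · rw [abs_of_neg c1, abs_of_neg c2, abs_of_nonneg c3]
    nlinarith [mul_pos_of_neg_of_neg c1 c2, c3, hp, hs, hN]
  · rw [abs_of_neg c1, abs_of_neg c2, abs_of_neg c3]; linarith

lemma sum_abs_bound_one (r1 r2 r3 : ℝ)
    (h1 : -2 < r1) (h2 : -2 < r2) (h3 : -2 < r3)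
    (hs : r1 + r2 + r3 = -1) (hp : r1 * r2 * r3 = 2) :
    |r1| + |r2| + |r3| < 5 := by
  rcases le_or_gt 0 r1 with c1 | c1 <;> rcases le_or_gt 0 r2 with c2 | c2 <;>
    rcases le_or_gt 0 r3 with c3 | c3
  · rw [abs_of_nonneg c1, abs_of_nonneg c2, abs_of_nonneg c3]; linarith
  · rw [abs_of_nonneg c1, abs_of_nonneg c2, abs_of_neg c3]
    nlinarith [mul_nonneg c1 c2, c3, hp]
  · rw [abs_of_nonneg c1, abs_of_neg c2, abs_of_nonneg c3]
    nlinarith [mul_nonneg c1 c3, c2, hp]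
  · rw [abs_of_nonneg c1, abs_of_neg c2, abs_of_neg c3]
    nlinarith [mul_pos (by linarith : (0:ℝ) < r2 + 2) (by linarith : (0:ℝ) < r3 + 2), c1, hp, hs]
  · rw [abs_of_neg c1, abs_of_nonneg c2, abs_of_nonneg c3]
    nlinarith [mul_nonneg c2 c3, c1, hp]
  · rw [abs_of_neg c1, abs_of_nonneg c2, abs_of_neg c3]
    nlinarith [mul_pos (by linarith : (0:ℝ) < r1 + 2) (by linarith : (0:ℝ) < r3 + 2), c2, hp, hs]
  · rw [abs_of_neg c1, abs_of_neg c2, abs_of_nonneg c3]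
    nlinarith [mul_pos (by linarith : (0:ℝ) < r1 + 2) (by linarith : (0:ℝ) < r2 + 2), c3, hp, hs]
  · rw [abs_of_neg c1, abs_of_neg c2, abs_of_neg c3]
    nlinarith [mul_pos_of_neg_of_neg c1 c2, c3, hp]


lemma chrom_B_of_two_le (n : ℕ) (hn : 2 ≤ n) : (B n).chromaticNumber = (n : ℕ∞) := by
  haveI : NeZero n := ⟨by omega⟩
  apply le_antisymm
  · -- colorable with n colors
    have hcol : (B n).Colorable n := by
      refine ⟨SimpleGraph.Coloring.mk (Sum.elim id (fun _ => ⟨1, by omega⟩)) ?_⟩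
      rintro (i | p) (j | q) hadj
      · simp only [Sum.elim_inl, id]
        rintro rfl
        exact (B n).irrefl hadj
      · simp only [Sum.elim_inl, Sum.elim_inr, id]
        obtain ⟨hne, h | h⟩ := hadj
        · rcases h with ⟨_, _, _, _, h⟩ | ⟨i', p', hi', ha, hb⟩
          · exact absurd h (by simp)
          · intro hcontra
            have : i = i' := by simpa using ha
            subst this
            have : (i : ℕ) = 1 := by rw [hcontra]
            omega
        · rcases h with ⟨_, _, _, h, _⟩ | ⟨i', p', hi', ha, hb⟩
          · exact absurd h (by simp)
          · exact absurd ha (by simp)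
      · simp only [Sum.elim_inl, Sum.elim_inr, id]
        obtain ⟨hne, h | h⟩ := hadj
        · rcases h with ⟨_, _, _, h, _⟩ | ⟨i', p', hi', ha, hb⟩
          · exact absurd h (by simp)
          · exact absurd ha (by simp)
        · rcases h with ⟨_, _, _, _, h⟩ | ⟨i', p', hi', ha, hb⟩
          · exact absurd h (by simp)
          · intro hcontra
            have : j = i' := by simpa using ha
            subst this
            have : (j : ℕ) = 1 := by rw [← hcontra]
            omega
      · obtain ⟨hne, h | h⟩ := hadj <;>
          rcases h with ⟨_, _, _, h, _⟩ | ⟨_, _, _, h, _⟩ <;> exact absurd h (by simp)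
    exact hcol.chromaticNumber_le
  · -- clique of size n
    have hclique : (B n).IsClique (Finset.univ.image (Sum.inl : Fin n → Fin n ⊕ Fin 2)) := by
      intro a ha b hb hab
      simp only [Finset.coe_image, Set.mem_image, Finset.mem_coe, Finset.mem_univ] at ha hb
      obtain ⟨i, -, rfl⟩ := ha
      obtain ⟨j, -, rfl⟩ := hb
      have hij : i ≠ j := fun h => hab (by rw [h])
      exact ⟨hab, Or.inl (Or.inl ⟨i, j, hij, rfl, rfl⟩)⟩
    have := hclique.card_le_chromaticNumber
    rwa [Finset.card_image_of_injective _ Sum.inl_injective, Finset.card_univ,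
      Fintype.card_fin] at this

lemma chrom_B_one : (B 1).chromaticNumber = (2 : ℕ∞) := by
  haveI : NeZero 1 := ⟨one_ne_zero⟩
  apply le_antisymm
  · have hcol : (B 1).Colorable 2 := by
      refine ⟨SimpleGraph.Coloring.mk (Sum.elim (fun _ => 0) (fun _ => 1)) ?_⟩
      rintro (i | p) (j | q) hadj
      · obtain ⟨hne, _⟩ := hadj
        exact absurd (congrArg Sum.inl (Subsingleton.elim i j)) hne
      · simp
      · simp
      · obtain ⟨hne, h | h⟩ := hadj <;>
          rcases h with ⟨_, _, _, h, _⟩ | ⟨_, _, _, h, _⟩ <;> exact absurd h (by simp)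
    exact_mod_cast hcol.chromaticNumber_le
  · have hadj10 : (B 1).Adj (Sum.inl 0) (Sum.inr 0) :=
      ⟨by simp, Or.inl (Or.inr ⟨0, 0, rfl, rfl, rfl⟩)⟩
    have hclique : (B 1).IsClique
        (({Sum.inl 0, Sum.inr 0} : Finset (Fin 1 ⊕ Fin 2)) : Set (Fin 1 ⊕ Fin 2)) := by
      intro a ha b hb hab
      simp only [Finset.coe_insert, Finset.coe_singleton, Set.mem_insert_iff,
        Set.mem_singleton_iff] at ha hb
      rcases ha with rfl | rfl <;> rcases hb with rfl | rfl
      · exact absurd rfl hab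
      · exact hadj10
      · exact hadj10.symm
      · exact absurd rfl hab
    have := hclique.card_le_chromaticNumber
    simpa using this

/-- For every `n ≥ 1`: `E(Bₙ) < 2χ(Bₙ)`, with `χ(Bₙ) = n` when `n ≥ 3`, and every adjacency
eigenvalue of `Bₙ` is strictly greater than `-2`. -/
theorem energy_B_lt_two_chromatic (n : ℕ) (hn : 1 ≤ n) :
    energy (B n) < 2 * ((B n).chromaticNumber.toNat : ℝ) ∧
    (3 ≤ n → (B n).chromaticNumber = (n : ℕ∞)) ∧
    (∀ i, -2 < eig (B n) i) := by
  haveI : NeZero n := ⟨by omega⟩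
  have hdet : ∀ x : ℝ, x ≠ 0 → x + 1 ≠ 0 →
      (∏ i, (x - eig (B n) i)) * (x + 1) = (x + 1) ^ (n - 1) * x *
        (x ^ 3 - ((n : ℝ) - 2) * x ^ 2 - ((n : ℝ) + 1) * x + (2 * (n : ℝ) - 4)) := by
    intro x hx hx1
    rw [← det_smul_one_sub, adjMat_B n]
    exact det_block n x hx hx1
  obtain ⟨r1, r2, r3, hmult, heval⟩ := poly_step n (eig (B n)) hdet
  have hn1 : (1 : ℝ) ≤ (n : ℝ) := by exact_mod_cast hn
  have hr1 : -2 < r1 := root_gt_neg_two (n : ℝ) r1 hn1 (by rw [heval r1]; ring)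
  have hr2 : -2 < r2 := root_gt_neg_two (n : ℝ) r2 hn1 (by rw [heval r2]; ring)
  have hr3 : -2 < r3 := root_gt_neg_two (n : ℝ) r3 hn1 (by rw [heval r3]; ring)
  have hmem : ∀ i, eig (B n) i = -1 ∨ eig (B n) i = 0 ∨
      eig (B n) i = r1 ∨ eig (B n) i = r2 ∨ eig (B n) i = r3 := by
    intro i
    have h1 : eig (B n) i ∈ (Finset.univ.val.map (eig (B n))) + ({-1} : Multiset ℝ) :=
      Multiset.mem_add.2 (Or.inl (Multiset.mem_map_of_mem _ (Finset.mem_univ i)))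
    rw [hmult] at h1
    rcases Multiset.mem_add.1 h1 with h | h
    · exact Or.inl (Multiset.eq_of_mem_replicate h)
    rcases Multiset.mem_add.1 h with h | h
    · exact Or.inr (Or.inl (Multiset.mem_singleton.1 h))
    · simp only [Multiset.insert_eq_cons, Multiset.mem_cons, Multiset.mem_singleton] at h
      tauto
  have hgt : ∀ i, -2 < eig (B n) i := by
    intro i
    rcases hmem i with h | h | h | h | h <;> rw [h] <;> linarith
  have hs : r1 + r2 + r3 = (n : ℝ) - 2 := by
    linear_combination (1/2) * (heval 1) + (1/2) * (heval (-1)) - heval 0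
  have hp : r1 * r2 * r3 = 4 - 2 * (n : ℝ) := by linear_combination heval 0
  -- energy identity
  have hE : energy (B n) + 1 = ((n - 1 : ℕ) : ℝ) + (|r1| + |r2| + |r3|) := by
    have h1 : energy (B n) = ((Finset.univ.val.map (eig (B n))).map (fun a => |a|)).sum := by
      rw [energy, Finset.sum, Multiset.map_map]
      rfl
    have h2 := congrArg (fun m : Multiset ℝ => (m.map (fun a => |a|)).sum) hmult
    simp only [Multiset.map_add, Multiset.sum_add, Multiset.map_singleton,
      Multiset.sum_singleton, Multiset.map_replicate, Multiset.insert_eq_cons,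
      Multiset.map_cons, Multiset.sum_cons, Multiset.sum_replicate, abs_neg, abs_one,
      abs_zero, nsmul_eq_mul, mul_one] at h2
    rw [h1, h2]
    ring
  refine ⟨?_, fun h3 => chrom_B_of_two_le n (by omega), hgt⟩
  rcases eq_or_lt_of_le hn with h1 | h2
  · -- n = 1
    have hn1' : n = 1 := h1.symm
    subst hn1'
    rw [chrom_B_one]
    have habs : |r1| + |r2| + |r3| < 5 := by
      apply sum_abs_bound_one r1 r2 r3 hr1 hr2 hr3 <;> push_cast at hs hp ⊢ <;> linarith
    have h2nat : ((2 : ℕ∞)).toNat = 2 := rfl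
    rw [h2nat]
    push_cast at hE ⊢
    norm_num at hE
    linarith
  · -- n ≥ 2
    have hn2 : 2 ≤ n := h2
    rw [chrom_B_of_two_le n hn2, ENat.toNat_coe]
    have habs : |r1| + |r2| + |r3| < (n : ℝ) + 2 :=
      sum_abs_bound_ge_two (n : ℝ) r1 r2 r3 (by exact_mod_cast hn2) hr1 hr2 hr3 hs hp
    have hcast : ((n - 1 : ℕ) : ℝ) = (n : ℝ) - 1 := by
      rw [Nat.cast_sub hn]; norm_num
    rw [hcast] at hE
    linarith
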